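/- arXiv:2012.15381 — 10 statements merged into one kernel-verified Lean document; each statement's English description precedes it below -/
import Mathlib

section
/- Let P be a finite set of points in the Euclidean plane and let p, q, r be three points of sky(P) with x(p) < x(q) < x(r). Then d(q,r) < d(p,r). -/
abbrev Pt : Type := EuclideanSpace ℝ (Fin 2)

open Classical in
noncomputable def sky (P : Finset Pt) : Finset Pt :=
  P.filter (fun p => ∀ q ∈ P, q ≠ p → q 0 < p 0 ∨ q 1 < p 1)

theorem EuclideanSpace.dist_lt_dist_of_forall_dist_lt {ι : Type*} [Fintype ι] [Nonempty ι]
    {p q r : EuclideanSpace ℝ ι} (h : ∀ i, dist (q i) (r i) < dist (p i) (r i)) :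
    dist q r < dist p r := by
  rw [EuclideanSpace.dist_eq, EuclideanSpace.dist_eq]
  refine Real.sqrt_lt_sqrt (by positivity) ?_
  exact Finset.sum_lt_sum_of_nonempty Finset.univ_nonempty fun i _ =>
    pow_lt_pow_left₀ (h i) dist_nonneg two_ne_zero

theorem snd_lt_of_mem_sky_of_fst_lt {P : Finset Pt} {p q : Pt} (hp : p ∈ sky P) (hq : q ∈ P)
    (hpq : p 0 < q 0) : q 1 < p 1 := by
  have hqp : q ≠ p := fun h => hpq.ne' (congrArg (· 0) h)
  exact ((Finset.mem_filter.mp hp).2 q hq hqp).resolve_left hpq.not_gt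

theorem stmt2 (P : Finset Pt) (p q r : Pt)
    (hp : p ∈ sky P) (hq : q ∈ sky P) (hr : r ∈ sky P)
    (hpq : p 0 < q 0) (hqr : q 0 < r 0) :
    dist q r < dist p r := by
  have hy_qp : q 1 < p 1 := snd_lt_of_mem_sky_of_fst_lt hp (Finset.mem_of_mem_filter q hq) hpq
  have hy_rq : r 1 < q 1 := snd_lt_of_mem_sky_of_fst_lt hq (Finset.mem_of_mem_filter r hr) hqr
  refine EuclideanSpace.dist_lt_dist_of_forall_dist_lt (Fin.forall_fin_two.mpr ⟨?_, ?_⟩)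
  · rw [Real.dist_eq, Real.dist_eq, abs_of_neg (by linarith), abs_of_neg (by linarith)]
    linarith
  · rw [Real.dist_eq, Real.dist_eq, abs_of_pos (by linarith), abs_of_pos (by linarith)]
    linarith
end

section
/- Let P be a finite set of points in the Euclidean plane, let λ ≥ 0, and let c, p, q, r be points of sky(P) with x(p) ≤ x(q) ≤ x(r). If d(c,p) ≤ λ and d(c,r) ≤ λ, then d(c,q) ≤ λ. (Any disk centered at a point of sky(P) contains a contiguous subsequence of sky(P) in the x-order.) -/
lemma dist_eq_two (a b : Pt) :
    dist a b = Real.sqrt ((a 0 - b 0)^2 + (a 1 - b 1)^2) := by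
  rw [EuclideanSpace.dist_eq, Fin.sum_univ_two]
  simp [Real.dist_eq, sq_abs]

lemma dist_mono_coord (c a b : Pt)
    (h0 : |c 0 - a 0| ≤ |c 0 - b 0|) (h1 : |c 1 - a 1| ≤ |c 1 - b 1|) :
    dist c a ≤ dist c b := by
  rw [dist_eq_two, dist_eq_two]
  apply Real.sqrt_le_sqrt
  nlinarith [sq_abs (c 0 - a 0), sq_abs (c 0 - b 0), sq_abs (c 1 - a 1), sq_abs (c 1 - b 1),
    abs_nonneg (c 0 - a 0), abs_nonneg (c 1 - a 1)]

lemma sky_anti (P : Finset Pt) (a b : Pt) (ha : a ∈ sky P) (hb : b ∈ sky P)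
    (h : a 0 ≤ b 0) : b 1 ≤ a 1 := by
  rcases eq_or_ne b a with rfl | hne
  · exact le_refl _
  · simp only [sky, Finset.mem_filter] at ha hb
    rcases ha.2 b hb.1 hne with h' | h'
    · linarith
    · exact h'.le

theorem stmt3 (P : Finset Pt) (lam : ℝ) (hlam : 0 ≤ lam) (c p q r : Pt)
    (hc : c ∈ sky P) (hp : p ∈ sky P) (hq : q ∈ sky P) (hr : r ∈ sky P)
    (hpq : p 0 ≤ q 0) (hqr : q 0 ≤ r 0)
    (hcp : dist c p ≤ lam) (hcr : dist c r ≤ lam) :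
    dist c q ≤ lam := by
  rcases eq_or_ne q c with rfl | hne
  · simpa using hlam
  · have hr1 : r 1 ≤ q 1 := sky_anti P q r hq hr hqr
    have hp1 : q 1 ≤ p 1 := sky_anti P p q hp hq hpq
    simp only [sky, Finset.mem_filter] at hc hq
    have h1 := hc.2 q hq.1 hne
    have h2 := hq.2 c hc.1 (Ne.symm hne)
    rcases h2 with h2 | h2
    · have hq1 : q 1 < c 1 := by
        rcases h1 with h | h
        · linarith
        · exact h
      have key := dist_mono_coord c q r
        (by rw [abs_of_nonpos (by linarith), abs_of_nonpos (by linarith)]; linarith)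
        (by rw [abs_of_nonneg (by linarith), abs_of_nonneg (by linarith)]; linarith)
      linarith
    · have hq0 : q 0 < c 0 := by
        rcases h1 with h | h
        · exact h
        · linarith
      have key := dist_mono_coord c q p
        (by rw [abs_of_nonneg (by linarith), abs_of_nonneg (by linarith)]; linarith)
        (by rw [abs_of_nonpos (by linarith), abs_of_nonpos (by linarith)]; linarith)
      linarith
end

section
/- Let P be the union of finite point sets P₁, …, Pₜ in the Euclidean plane, and let x₀ ∈ ℝ be such that each Pᵢ contains a point with x-coordinate strictly greater than x₀. For each i, let nᵢ = next(sky(Pᵢ), x₀), and let p* be the highest point among n₁, …, nₜ, breaking ties in favor of larger x-coordinate (that is, (y(nᵢ), x(nᵢ)) ≤ (y(p*), x(p*)) lexicographically for all i). Then p* = next(sky(P), x₀). -/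
open Classical in
lemma mem_sky_iff {Q : Finset Pt} {p : Pt} :
    p ∈ sky Q ↔ p ∈ Q ∧ ∀ q ∈ Q, q ≠ p → q 0 < p 0 ∨ q 1 < p 1 := by
  simp [sky]

lemma exists_mem_sky_dominates (Q : Finset Pt) {q : Pt} (hq : q ∈ Q) :
    ∃ r ∈ sky Q, q 0 ≤ r 0 ∧ q 1 ≤ r 1 := by
  classical
  set S := Q.filter (fun r => q 0 ≤ r 0 ∧ q 1 ≤ r 1)
  obtain ⟨r, hrS, hmax⟩ := S.exists_max_image (fun r => r 0 + r 1) ⟨q, by simp [S, hq]⟩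
  obtain ⟨hrQ, hqr0, hqr1⟩ := Finset.mem_filter.mp hrS
  refine ⟨r, mem_sky_iff.mpr ⟨hrQ, fun s hs hne => ?_⟩, hqr0, hqr1⟩
  by_contra! hdom
  have hsum := hmax s (Finset.mem_filter.mpr ⟨hs, hqr0.trans hdom.1, hqr1.trans hdom.2⟩)
  refine hne ?_
  ext i
  fin_cases i <;> simp only [Fin.zero_eta, Fin.mk_one, Fin.isValue] <;> linarith [hdom.1, hdom.2]

def heightKey (p : Pt) : ℝ ×ₗ ℝ := toLex (p 1, p 0)

lemma heightKey_le_heightKey_iff {p q : Pt} :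
    heightKey p ≤ heightKey q ↔ p 1 < q 1 ∨ (p 1 = q 1 ∧ p 0 ≤ q 0) :=
  Prod.Lex.toLex_le_toLex

lemma heightKey_injective : Function.Injective heightKey := by
  intro p q h
  simp only [heightKey, toLex_inj, Prod.mk.injEq] at h
  ext i
  fin_cases i
  exacts [h.2, h.1]

lemma heightKey_le_heightKey_of_le {p q : Pt} (h0 : p 0 ≤ q 0) (h1 : p 1 ≤ q 1) :
    heightKey p ≤ heightKey q :=
  heightKey_le_heightKey_iff.mpr (h1.lt_or_eq.imp id fun h => ⟨h, h0⟩)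

lemma heightKey_le_of_mem_sky {Q : Finset Pt} {p q : Pt} (hp : p ∈ sky Q) (hq : q ∈ Q)
    (hpq : p 0 ≤ q 0) : heightKey q ≤ heightKey p := by
  rcases eq_or_ne q p with rfl | hne
  · rfl
  rcases (mem_sky_iff.mp hp).2 q hq hne with h | h
  · exact absurd hpq h.not_ge
  · exact heightKey_le_heightKey_iff.mpr (Or.inl h)

def IsHighestRightOf (Q : Finset Pt) (x₀ : ℝ) (m : Pt) : Prop :=
  m ∈ Q ∧ x₀ < m 0 ∧ ∀ q ∈ Q, x₀ < q 0 → heightKey q ≤ heightKey m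

lemma isHighestRightOf_of_next_sky {Q : Finset Pt} {x₀ : ℝ} {n : Pt} (hn : n ∈ sky Q)
    (hx : x₀ < n 0) (hnext : ∀ q ∈ sky Q, x₀ < q 0 → n 0 ≤ q 0) :
    IsHighestRightOf Q x₀ n := by
  refine ⟨(mem_sky_iff.mp hn).1, hx, fun q hq hqx => ?_⟩
  obtain ⟨r, hr, hqr0, hqr1⟩ := exists_mem_sky_dominates Q hq
  calc heightKey q ≤ heightKey r := heightKey_le_heightKey_of_le hqr0 hqr1
    _ ≤ heightKey n :=
      heightKey_le_of_mem_sky hn (mem_sky_iff.mp hr).1 (hnext r hr (hqx.trans_le hqr0))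

namespace IsHighestRightOf

variable {Q : Finset Pt} {x₀ : ℝ} {m : Pt}

lemma mem_sky (h : IsHighestRightOf Q x₀ m) : m ∈ sky Q := by
  refine mem_sky_iff.mpr ⟨h.1, fun q hq hne => ?_⟩
  by_contra! hdom
  have hkey := h.2.2 q hq (h.2.1.trans_le hdom.1)
  exact hne (heightKey_injective (hkey.antisymm (heightKey_le_heightKey_of_le hdom.1 hdom.2)))

lemma le_of_mem_sky (h : IsHighestRightOf Q x₀ m) {q : Pt} (hq : q ∈ sky Q) (hqx : x₀ < q 0) :
    m 0 ≤ q 0 := by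
  by_contra! hlt
  have hkey := heightKey_le_of_mem_sky hq h.1 hlt.le
  have hqm := heightKey_injective (hkey.antisymm (h.2.2 q (mem_sky_iff.mp hq).1 hqx))
  exact hlt.ne' (congrArg (· 0) hqm)

lemma biUnion {ι : Type*} [DecidableEq Pt] {s : Finset ι} {Ps : ι → Finset Pt} {n : ι → Pt}
    (hn : ∀ i ∈ s, IsHighestRightOf (Ps i) x₀ (n i)) {i₀ : ι} (hi₀ : i₀ ∈ s)
    (hmax : ∀ i ∈ s, heightKey (n i) ≤ heightKey (n i₀)) :
    IsHighestRightOf (s.biUnion Ps) x₀ (n i₀) := by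
  refine ⟨Finset.mem_biUnion.mpr ⟨i₀, hi₀, (hn i₀ hi₀).1⟩, (hn i₀ hi₀).2.1, fun q hq hqx => ?_⟩
  obtain ⟨j, hj, hqj⟩ := Finset.mem_biUnion.mp hq
  exact ((hn j hj).2.2 q hqj hqx).trans (hmax j hj)

end IsHighestRightOf

open Classical in
theorem stmt5 (t : ℕ) (Ps : Fin t → Finset Pt) (P : Finset Pt)
    (hP : P = Finset.univ.biUnion Ps)
    (x₀ : ℝ)
    (n : Fin t → Pt)
    (hn : ∀ i, n i ∈ sky (Ps i) ∧ x₀ < (n i) 0 ∧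
      ∀ q ∈ sky (Ps i), x₀ < q 0 → (n i) 0 ≤ q 0)
    (pstar : Pt) (hpstar : ∃ i, pstar = n i)
    (hhighest : ∀ i, (n i) 1 < pstar 1 ∨ ((n i) 1 = pstar 1 ∧ (n i) 0 ≤ pstar 0)) :
    pstar ∈ sky P ∧ x₀ < pstar 0 ∧ ∀ q ∈ sky P, x₀ < q 0 → pstar 0 ≤ q 0 := by
  obtain ⟨i₀, rfl⟩ := hpstar
  subst hP
  have hstar : IsHighestRightOf (Finset.univ.biUnion Ps) x₀ (n i₀) :=
    IsHighestRightOf.biUnion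
      (fun i _ => isHighestRightOf_of_next_sky (hn i).1 (hn i).2.1 (hn i).2.2)
      (Finset.mem_univ i₀) (fun i _ => heightKey_le_heightKey_iff.mpr (hhighest i))
  exact ⟨hstar.mem_sky, hstar.2.1, fun q hq hqx => hstar.le_of_mem_sky hq hqx⟩
end

section
/- Let P be a finite set of points in the Euclidean plane, p ∈ sky(P) and λ ≥ 0. Consider the set A = { q ∈ sky(P) : x(q) ≥ x(p) and d(p,q) ≤ λ }, which is nonempty since p ∈ A. If q* is the point of A with maximum x-coordinate, then d(p,q) ≤ d(p,q*) for every q ∈ A; that is, the farthest point of A from p is the point of A with largest x-coordinate. -/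
theorem stmt8 (P : Finset Pt) (p : Pt) (hp : p ∈ sky P)
    (lam : ℝ) (hlam : 0 ≤ lam)
    (qstar : Pt)
    (hqstar : qstar ∈ sky P ∧ p 0 ≤ qstar 0 ∧ dist p qstar ≤ lam)
    (hmax : ∀ q ∈ sky P, p 0 ≤ q 0 → dist p q ≤ lam → q 0 ≤ qstar 0) :
    ∀ q ∈ sky P, p 0 ≤ q 0 → dist p q ≤ lam → dist p q ≤ dist p qstar := by
  obtain ⟨hs, hsx, hsd⟩ := hqstar
  intro q hq hpq hdl
  have hqx : q 0 ≤ qstar 0 := hmax q hq hpq hdl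
  simp only [sky, Finset.mem_filter] at hp hq hs
  have hqy : q 1 ≤ p 1 := by
    by_cases h : q = p
    · simp [h]
    · exact le_of_lt ((hp.2 q hq.1 h).resolve_left (not_lt.2 hpq))
  have hsy : qstar 1 ≤ q 1 := by
    by_cases h : qstar = q
    · simp [h]
    · exact le_of_lt ((hq.2 qstar hs.1 h).resolve_left (not_lt.2 hqx))
  rw [EuclideanSpace.dist_eq, EuclideanSpace.dist_eq]
  apply Real.sqrt_le_sqrt
  rw [Fin.sum_univ_two, Fin.sum_univ_two]
  simp only [Real.dist_eq]
  have h1 : |p 0 - q 0| = q 0 - p 0 := by rw [abs_sub_comm, abs_of_nonneg (by linarith)]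
  have h2 : |p 0 - qstar 0| = qstar 0 - p 0 := by
    rw [abs_sub_comm, abs_of_nonneg (by linarith)]
  have h3 : |p 1 - q 1| = p 1 - q 1 := abs_of_nonneg (by linarith)
  have h4 : |p 1 - qstar 1| = p 1 - qstar 1 := abs_of_nonneg (by linarith)
  rw [h1, h2, h3, h4]
  nlinarith [sq_nonneg (q 0 - p 0), sq_nonneg (p 1 - q 1)]
end

section
/- Let P be a nonempty finite set of points in the Euclidean plane, let λ ≥ 0 and let k ≥ 1 be an integer. Let p be the point of sky(P) with smallest x-coordinate, let r = nrp(nrp(p,λ), λ), and let S' = { q ∈ sky(P) : x(q) > x(r) }. Then opt(P,k) ≤ λ if and only if S' = ∅, or k ≥ 2 and opt(S', k−1) ≤ λ. (Note that sky(S') = S', since S' is a subset of a skyline.) -/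
noncomputable def psi (Q P : Finset Pt) : ℝ :=
  sSup {r : ℝ | ∃ p ∈ sky P, r = sInf {s : ℝ | ∃ q ∈ Q, s = dist p q}}

noncomputable def optk (P : Finset Pt) (k : ℕ) : ℝ :=
  sInf {r : ℝ | ∃ Q : Finset Pt, Q ⊆ sky P ∧ Q.Nonempty ∧ Q.card ≤ k ∧ r = psi Q P}

open Classical in
lemma sky_subset_ (P : Finset Pt) : sky P ⊆ P := Finset.filter_subset _ _

open Classical in
lemma sky_y {P : Finset Pt} {a b : Pt} (ha : a ∈ sky P) (hb : b ∈ P)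
    (h : a 0 ≤ b 0) : b 1 ≤ a 1 := by
  rcases eq_or_ne b a with rfl | hne
  · exact le_refl _
  · rcases (Finset.mem_filter.mp ha).2 b hb hne with h' | h'
    · linarith
    · linarith

lemma dist_coord (a b : Pt) :
    dist a b = Real.sqrt ((a 0 - b 0) ^ 2 + (a 1 - b 1) ^ 2) := by
  rw [EuclideanSpace.dist_eq]
  simp [Fin.sum_univ_two, Real.dist_eq, sq_abs]

/-- Moving the left endpoint right (towards `s`) along a skyline decreases distance. -/
lemma dist_mono {P : Finset Pt} {a b s : Pt} (ha : a ∈ sky P) (hb : b ∈ sky P)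
    (hs : s ∈ P) (h1 : a 0 ≤ b 0) (h2 : b 0 ≤ s 0) : dist b s ≤ dist a s := by
  have hy1 : b 1 ≤ a 1 := sky_y ha (sky_subset_ _ hb) h1
  have hy2 : s 1 ≤ b 1 := sky_y hb hs h2
  rw [dist_coord, dist_coord]
  apply Real.sqrt_le_sqrt
  nlinarith [sq_nonneg (a 0 - b 0), sq_nonneg (a 1 - b 1)]

/-- Moving the right endpoint left (towards `a`) along a skyline decreases distance. -/
lemma dist_mono' {P : Finset Pt} {a b s : Pt} (ha : a ∈ sky P) (hb : b ∈ sky P)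
    (hs : s ∈ P) (h1 : a 0 ≤ b 0) (h2 : b 0 ≤ s 0) : dist a b ≤ dist a s := by
  have hy1 : b 1 ≤ a 1 := sky_y ha (sky_subset_ _ hb) h1
  have hy2 : s 1 ≤ b 1 := sky_y hb hs h2
  rw [dist_coord, dist_coord]
  apply Real.sqrt_le_sqrt
  nlinarith [sq_nonneg (b 0 - s 0), sq_nonneg (b 1 - s 1)]

lemma psi_le {Q P : Finset Pt} {lam : ℝ} (hlam : 0 ≤ lam)
    (h : ∀ s ∈ sky P, ∃ q ∈ Q, dist s q ≤ lam) : psi Q P ≤ lam := by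
  apply Real.sSup_le _ hlam
  rintro r ⟨s, hs, rfl⟩
  obtain ⟨q, hq, hd⟩ := h s hs
  exact csInf_le_of_le ⟨0, by rintro x ⟨q', _, rfl⟩; exact dist_nonneg⟩ ⟨q, hq, rfl⟩ hd

lemma psi_outer_finite (Q P : Finset Pt) :
    {r : ℝ | ∃ p ∈ sky P, r = sInf {s : ℝ | ∃ q ∈ Q, s = dist p q}}.Finite := by
  apply Set.Finite.subset
    ((sky P).finite_toSet.image (fun p => sInf {s : ℝ | ∃ q ∈ Q, s = dist p q}))
  rintro r ⟨p, hp, rfl⟩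
  exact ⟨p, hp, rfl⟩

lemma covered {Q P : Finset Pt} {lam : ℝ} (hQ : Q.Nonempty) (h : psi Q P ≤ lam)
    {s : Pt} (hs : s ∈ sky P) : ∃ q ∈ Q, dist s q ≤ lam := by
  set T : Set ℝ := {t | ∃ q ∈ Q, t = dist s q} with hT
  have hTfin : T.Finite := by
    apply Set.Finite.subset (Q.finite_toSet.image (fun q => dist s q))
    rintro t ⟨q, hq, rfl⟩
    exact ⟨q, hq, rfl⟩
  obtain ⟨q0, hq0⟩ := hQ
  have hTne : T.Nonempty := ⟨dist s q0, q0, hq0, rfl⟩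
  obtain ⟨q, hq, heq⟩ := hTne.csInf_mem hTfin
  refine ⟨q, hq, ?_⟩
  rw [← heq]
  calc sInf T ≤ psi Q P := le_csSup (psi_outer_finite Q P).bddAbove ⟨s, hs, rfl⟩
    _ ≤ lam := h

lemma optk_set_finite (P : Finset Pt) (k : ℕ) :
    {r : ℝ | ∃ Q : Finset Pt, Q ⊆ sky P ∧ Q.Nonempty ∧ Q.card ≤ k ∧ r = psi Q P}.Finite := by
  apply Set.Finite.subset (((sky P).powerset.finite_toSet).image (fun Q => psi Q P))
  rintro r ⟨Q, hsub, -, -, rfl⟩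
  exact ⟨Q, Finset.mem_coe.2 (Finset.mem_powerset.2 hsub), rfl⟩

lemma optk_le {P : Finset Pt} {k : ℕ} {lam : ℝ} (Q : Finset Pt)
    (hsub : Q ⊆ sky P) (hne : Q.Nonempty) (hcard : Q.card ≤ k)
    (h : psi Q P ≤ lam) : optk P k ≤ lam :=
  csInf_le_of_le (optk_set_finite P k).bddBelow ⟨Q, hsub, hne, hcard, rfl⟩ h

lemma optk_attained {P : Finset Pt} {k : ℕ} (hk : 1 ≤ k) (hsky : (sky P).Nonempty) :
    ∃ Q : Finset Pt, Q ⊆ sky P ∧ Q.Nonempty ∧ Q.card ≤ k ∧ psi Q P = optk P k := by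
  obtain ⟨x, hx⟩ := hsky
  have hne : {r : ℝ | ∃ Q : Finset Pt,
      Q ⊆ sky P ∧ Q.Nonempty ∧ Q.card ≤ k ∧ r = psi Q P}.Nonempty := by
    refine ⟨psi {x} P, {x}, ?_, ⟨x, Finset.mem_singleton_self x⟩, ?_, rfl⟩
    · simpa using hx
    · simpa using hk
  obtain ⟨Q, h1, h2, h3, h4⟩ := hne.csInf_mem (optk_set_finite P k)
  exact ⟨Q, h1, h2, h3, h4.symm⟩

theorem stmt10 (P : Finset Pt) (hP : P.Nonempty)
    (lam : ℝ) (hlam : 0 ≤ lam) (k : ℕ) (hk : 1 ≤ k)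
    (p : Pt) (hp : p ∈ sky P) (hpmin : ∀ q ∈ sky P, p 0 ≤ q 0)
    (c : Pt) (hc : c ∈ sky P ∧ p 0 ≤ c 0 ∧ dist p c ≤ lam)
    (hcmax : ∀ q ∈ sky P, p 0 ≤ q 0 → dist p q ≤ lam → q 0 ≤ c 0)
    (r : Pt) (hr : r ∈ sky P ∧ c 0 ≤ r 0 ∧ dist c r ≤ lam)
    (hrmax : ∀ q ∈ sky P, c 0 ≤ q 0 → dist c q ≤ lam → q 0 ≤ r 0)
    (S' : Finset Pt) (hS' : ∀ q, q ∈ S' ↔ q ∈ sky P ∧ r 0 < q 0) :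
    optk P k ≤ lam ↔ (S' = ∅ ∨ (2 ≤ k ∧ optk S' (k - 1) ≤ lam)) := by
  classical
  obtain ⟨hcsky, hpc, hdpc⟩ := hc
  obtain ⟨hrsky, hcr, hdcr⟩ := hr
  have hS'sub : S' ⊆ sky P := fun q hq => ((hS' q).1 hq).1
  -- sky S' = S'
  have hskyS' : sky S' = S' := by
    apply Finset.filter_eq_self.mpr
    intro x hx q hq hne
    exact (Finset.mem_filter.mp (hS'sub hx)).2 q (sky_subset_ _ (hS'sub hq)) hne
  -- c covers every skyline point with x-coordinate ≤ r 0
  have hcovc : ∀ q ∈ sky P, q 0 ≤ r 0 → dist q c ≤ lam := by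
    intro q hq hqr
    rcases le_total (q 0) (c 0) with hcase | hcase
    · calc dist q c ≤ dist p c := dist_mono hp hq (sky_subset_ _ hcsky) (hpmin q hq) hcase
        _ ≤ lam := hdpc
    · rw [dist_comm]
      calc dist c q ≤ dist c r := dist_mono' hcsky hq (sky_subset_ _ hrsky) hcase hqr
        _ ≤ lam := hdcr
  -- key: no point covering p can cover any point of S'
  have hkey : ∀ q ∈ sky P, ∀ s ∈ sky P, dist p q ≤ lam → r 0 < s 0 →
      dist q s ≤ lam → False := by
    intro q hq s hs hdpq hrs hdqs
    have hqc : q 0 ≤ c 0 := hcmax q hq (hpmin q hq) hdpq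
    have hcs : c 0 ≤ s 0 := le_trans hcr (le_of_lt hrs)
    have : dist c s ≤ dist q s := dist_mono hq hcsky (sky_subset_ _ hs) hqc hcs
    have := hrmax s hs hcs (le_trans this hdqs)
    linarith
  constructor
  · -- forward direction
    intro hopt
    by_cases hS : S' = ∅
    · exact Or.inl hS
    right
    have hS'ne : S'.Nonempty := Finset.nonempty_of_ne_empty hS
    obtain ⟨Q, hQsub, hQne, hQcard, hQpsi⟩ := optk_attained hk ⟨p, hp⟩
    have hQlam : psi Q P ≤ lam := le_trans (le_of_eq hQpsi) hopt
    obtain ⟨s₀, hs₀⟩ := Finset.nonempty_of_ne_empty hS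
    have hs₀sky : s₀ ∈ sky P := hS'sub hs₀
    have hs₀r : r 0 < s₀ 0 := ((hS' s₀).1 hs₀).2
    -- a point of Q covering p
    obtain ⟨qp, hqpQ, hqpd⟩ := covered hQne hQlam hp
    have hqpsky : qp ∈ sky P := hQsub hqpQ
    -- qp covers nothing in S'
    have hqpnot : ∀ s ∈ S', ¬ dist s qp ≤ lam := by
      intro s hs hd
      exact hkey qp hqpsky s (hS'sub hs) hqpd ((hS' s).1 hs).2 (by rwa [dist_comm])
    have hqpS' : qp ∉ S' := by
      intro hmem
      have : r 0 < qp 0 := ((hS' qp).1 hmem).2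
      have : qp 0 ≤ c 0 := hcmax qp hqpsky (hpmin qp hqpsky) hqpd
      linarith
    -- k ≥ 2
    have hk2 : 2 ≤ k := by
      by_contra hlt
      have hk1 : k = 1 := by omega
      obtain ⟨qs, hqsQ, hqsd⟩ := covered hQne hQlam hs₀sky
      have : qs = qp := by
        have h1 : Q.card ≤ 1 := hk1 ▸ hQcard
        exact Finset.card_le_one.mp h1 qs hqsQ qp hqpQ
      exact hqpnot s₀ hs₀ (this ▸ hqsd)
    refine ⟨hk2, ?_⟩
    -- m: minimal x in S'
    obtain ⟨m, hmS', hmmin⟩ := S'.exists_min_image (fun q => q 0) hS'ne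
    have hmsky : m ∈ sky P := hS'sub hmS'
    have hrm : r 0 < m 0 := ((hS' m).1 hmS').2
    -- m covers any point of S' covered from the left of r
    have hmcov : ∀ s ∈ S', ∀ q ∈ sky P, q 0 ≤ r 0 → dist s q ≤ lam → dist s m ≤ lam := by
      intro s hs q hq hqr hd
      have hms : m 0 ≤ s 0 := hmmin s hs
      have hqm : q 0 ≤ m 0 := le_trans hqr (le_of_lt hrm)
      rw [dist_comm]
      rw [dist_comm s q] at hd
      exact (dist_mono hq hmsky (sky_subset_ _ (hS'sub hs)) hqm hms).trans hd
    -- points of Q not in S' have x ≤ r 0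
    have hnotS' : ∀ q ∈ Q, q ∉ S' → q 0 ≤ r 0 := by
      intro q hq hns
      by_contra hgt
      exact hns ((hS' q).2 ⟨hQsub hq, lt_of_not_ge hgt⟩)
    by_cases hA : ∀ s ∈ S', ∃ q ∈ Q ∩ S', dist s q ≤ lam
    · -- use Q ∩ S'
      obtain ⟨q₀, hq₀, hq₀d⟩ := hA s₀ hs₀
      have hsub' : Q ∩ S' ⊆ sky S' := by
        rw [hskyS']; exact Finset.inter_subset_right
      have hcard' : (Q ∩ S').card ≤ k - 1 := by
        have hsubE : Q ∩ S' ⊆ Q.erase qp := by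
          intro x hx
          rcases Finset.mem_inter.mp hx with ⟨hxQ, hxS⟩
          refine Finset.mem_erase.mpr ⟨?_, hxQ⟩
          rintro rfl; exact hqpS' hxS
        calc (Q ∩ S').card ≤ (Q.erase qp).card := Finset.card_le_card hsubE
          _ = Q.card - 1 := Finset.card_erase_of_mem hqpQ
          _ ≤ k - 1 := by omega
      refine optk_le (Q ∩ S') hsub' ⟨q₀, hq₀⟩ hcard' ?_
      apply psi_le hlam
      rw [hskyS']
      exact hA
    · -- some point of S' is only covered from outside S'
      push_neg at hA
      obtain ⟨s₁, hs₁, hs₁not⟩ := hA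
      obtain ⟨q₁, hq₁Q, hq₁d⟩ := covered hQne hQlam (hS'sub hs₁)
      have hq₁S' : q₁ ∉ S' := fun hmem => absurd hq₁d (not_le.mpr (hs₁not q₁ (Finset.mem_inter.mpr ⟨hq₁Q, hmem⟩)))
      have hq₁qp : q₁ ≠ qp := by
        rintro rfl; exact hqpnot s₁ hs₁ hq₁d
      have hcard2 : (Q ∩ S').card ≤ k - 2 := by
        have hins : insert qp (insert q₁ (Q ∩ S')) ⊆ Q := by
          intro x hx
          rcases Finset.mem_insert.mp hx with rfl | hx
          · exact hqpQ
          rcases Finset.mem_insert.mp hx with rfl | hx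
          · exact hq₁Q
          · exact (Finset.mem_inter.mp hx).1
        have h1 : q₁ ∉ Q ∩ S' := fun h => hq₁S' (Finset.mem_inter.mp h).2
        have h2 : qp ∉ insert q₁ (Q ∩ S') := by
          intro h
          rcases Finset.mem_insert.mp h with rfl | h
          · exact hq₁qp rfl
          · exact hqpS' (Finset.mem_inter.mp h).2
        have := Finset.card_le_card hins
        rw [Finset.card_insert_of_notMem h2, Finset.card_insert_of_notMem h1] at this
        omega
      set Q' := insert m (Q ∩ S') with hQ'
      have hsub' : Q' ⊆ sky S' := by
        rw [hskyS']
        intro x hx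
        rcases Finset.mem_insert.mp hx with rfl | hx
        · exact hmS'
        · exact (Finset.mem_inter.mp hx).2
      have hcard' : Q'.card ≤ k - 1 := by
        calc Q'.card ≤ (Q ∩ S').card + 1 := Finset.card_insert_le _ _
          _ ≤ k - 1 := by omega
      refine optk_le Q' hsub' ⟨m, Finset.mem_insert_self _ _⟩ hcard' ?_
      apply psi_le hlam
      rw [hskyS']
      intro s hs
      obtain ⟨q, hqQ, hqd⟩ := covered hQne hQlam (hS'sub hs)
      by_cases hqS : q ∈ S'
      · exact ⟨q, Finset.mem_insert_of_mem (Finset.mem_inter.mpr ⟨hqQ, hqS⟩), hqd⟩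
      · exact ⟨m, Finset.mem_insert_self _ _,
          hmcov s hs q (hQsub hqQ) (hnotS' q hqQ hqS) hqd⟩
  · -- reverse direction
    rintro h
    have hccase : S' = ∅ → optk P k ≤ lam := by
      intro hS
      refine optk_le {c} (by simpa using hcsky) ⟨c, Finset.mem_singleton_self c⟩
        (by simpa using hk) (psi_le hlam ?_)
      intro s hs
      refine ⟨c, Finset.mem_singleton_self c, hcovc s hs ?_⟩
      by_contra hgt
      have : s ∈ S' := (hS' s).2 ⟨hs, lt_of_not_ge hgt⟩
      simp [hS] at this
    rcases h with hS | ⟨hk2, hopt'⟩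
    · exact hccase hS
    by_cases hS : S' = ∅
    · exact hccase hS
    have hS'ne : S'.Nonempty := Finset.nonempty_of_ne_empty hS
    have hskyne : (sky S').Nonempty := by rw [hskyS']; exact hS'ne
    obtain ⟨Q', hQ'sub, hQ'ne, hQ'card, hQ'psi⟩ :=
      optk_attained (k := k - 1) (by omega) hskyne
    have hQ'lam : psi Q' S' ≤ lam := le_trans (le_of_eq hQ'psi) hopt'
    have hQ'S' : Q' ⊆ S' := hskyS' ▸ hQ'sub
    refine optk_le (insert c Q') ?_ ⟨c, Finset.mem_insert_self _ _⟩ ?_ ?_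
    · intro x hx
      rcases Finset.mem_insert.mp hx with rfl | hx
      · exact hcsky
      · exact hS'sub (hQ'S' hx)
    · calc (insert c Q').card ≤ Q'.card + 1 := Finset.card_insert_le _ _
        _ ≤ k := by omega
    · apply psi_le hlam
      intro s hs
      rcases le_or_gt (s 0) (r 0) with hsr | hsr
      · exact ⟨c, Finset.mem_insert_self _ _, hcovc s hs hsr⟩
      · have hsS' : s ∈ sky S' := by rw [hskyS']; exact (hS' s).2 ⟨hs, hsr⟩
        obtain ⟨q, hqQ', hqd⟩ := covered hQ'ne hQ'lam hsS'
        exact ⟨q, Finset.mem_insert_of_mem hqQ', hqd⟩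
end

section
/- Let P be a nonempty finite set of points in the Euclidean plane, let p₀ be the point of sky(P) with smallest x-coordinate and q₀ the point of sky(P) with largest x-coordinate. Then for every p ∈ sky(P), ψ({p}, P) = max{ d(p,p₀), d(p,q₀) }. -/
lemma sky_subset {P : Finset Pt} {a : Pt} (h : a ∈ sky P) : a ∈ P := by
  classical
  simp only [sky, Finset.mem_filter] at h
  exact h.1

lemma sky_prop {P : Finset Pt} {a : Pt} (h : a ∈ sky P) :
    ∀ q ∈ P, q ≠ a → q 0 < a 0 ∨ q 1 < a 1 := by
  classical
  simp only [sky, Finset.mem_filter] at h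
  exact h.2

lemma dist_le_btw (p q r : Pt) (h1 : r 0 ≤ q 0) (h2 : q 0 ≤ p 0)
    (h3 : p 1 ≤ q 1) (h4 : q 1 ≤ r 1) : dist p q ≤ dist p r := by
  rw [EuclideanSpace.dist_eq, EuclideanSpace.dist_eq]
  apply Real.sqrt_le_sqrt
  rw [Fin.sum_univ_two, Fin.sum_univ_two]
  simp only [Real.dist_eq, sq_abs]
  nlinarith

lemma dist_le_btw' (p q r : Pt) (h1 : p 0 ≤ q 0) (h2 : q 0 ≤ r 0)
    (h3 : r 1 ≤ q 1) (h4 : q 1 ≤ p 1) : dist p q ≤ dist p r := by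
  rw [EuclideanSpace.dist_eq, EuclideanSpace.dist_eq]
  apply Real.sqrt_le_sqrt
  rw [Fin.sum_univ_two, Fin.sum_univ_two]
  simp only [Real.dist_eq, sq_abs]
  nlinarith

theorem stmt12 (P : Finset Pt) (hP : P.Nonempty)
    (p₀ : Pt) (hp₀ : p₀ ∈ sky P) (hp₀min : ∀ q ∈ sky P, p₀ 0 ≤ q 0)
    (q₀ : Pt) (hq₀ : q₀ ∈ sky P) (hq₀max : ∀ q ∈ sky P, q 0 ≤ q₀ 0) :
    ∀ p ∈ sky P, psi {p} P = max (dist p p₀) (dist p q₀) := by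
  intro p hp
  have hinner : ∀ p' : Pt,
      {s : ℝ | ∃ q ∈ ({p} : Finset Pt), s = dist p' q} = {dist p' p} := by
    intro p'
    ext s
    simp [eq_comm]
  have hS : psi {p} P = sSup {r : ℝ | ∃ p' ∈ sky P, r = dist p' p} := by
    unfold psi
    congr 1
    ext r
    constructor
    · rintro ⟨p', hp', rfl⟩
      exact ⟨p', hp', by rw [hinner p', csInf_singleton]⟩
    · rintro ⟨p', hp', rfl⟩
      exact ⟨p', hp', by rw [hinner p', csInf_singleton]⟩
  -- key bound
  have hub : ∀ p' ∈ sky P, dist p p' ≤ max (dist p p₀) (dist p q₀) := by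
    intro p' hp'
    rcases le_total (p' 0) (p 0) with hx | hx
    · -- use p₀
      refine le_trans (dist_le_btw p p' p₀ (hp₀min p' hp') hx ?_ ?_) (le_max_left _ _)
      · rcases eq_or_ne p p' with rfl | hne
        · exact le_refl _
        · rcases sky_prop hp' p (sky_subset hp) hne with h | h
          · exact absurd hx (not_le.mpr h)
          · exact h.le
      · rcases eq_or_ne p' p₀ with rfl | hne
        · exact le_refl _
        · rcases sky_prop hp₀ p' (sky_subset hp') hne with h | h
          · exact absurd (hp₀min p' hp') (not_le.mpr h)
          · exact h.le
    · -- use q₀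
      refine le_trans (dist_le_btw' p p' q₀ hx (hq₀max p' hp') ?_ ?_) (le_max_right _ _)
      · rcases eq_or_ne p' q₀ with rfl | hne
        · exact le_refl _
        · exact ((sky_prop hp' q₀ (sky_subset hq₀) (Ne.symm hne)).resolve_left
            (not_lt.mpr (hq₀max p' hp'))).le
      · rcases eq_or_ne p p' with rfl | hne
        · exact le_refl _
        · rcases sky_prop hp p' (sky_subset hp') (Ne.symm hne) with h | h
          · exact absurd hx (not_le.mpr h)
          · exact h.le
  have hub' : ∀ r ∈ {r : ℝ | ∃ p' ∈ sky P, r = dist p' p},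
      r ≤ max (dist p p₀) (dist p q₀) := by
    rintro r ⟨p', hp', rfl⟩
    rw [dist_comm]
    exact hub p' hp'
  have hbdd : BddAbove {r : ℝ | ∃ p' ∈ sky P, r = dist p' p} :=
    ⟨max (dist p p₀) (dist p q₀), hub'⟩
  rw [hS]
  apply le_antisymm
  · exact csSup_le ⟨dist p₀ p, p₀, hp₀, rfl⟩ hub'
  · apply max_le
    · rw [dist_comm]
      exact le_csSup hbdd ⟨p₀, hp₀, rfl⟩
    · rw [dist_comm]
      exact le_csSup hbdd ⟨q₀, hq₀, rfl⟩
end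

section
/- Let P be a nonempty finite set of points in the Euclidean plane, let p₀ be the point of sky(P) with smallest x-coordinate and q₀ the point of sky(P) with largest x-coordinate. Then opt(P,1) = min_{p ∈ sky(P)} max{ d(p,p₀), d(p,q₀) }. -/
lemma sky_anti_s13 {P : Finset Pt} {p q : Pt} (hp : p ∈ sky P) (hq : q ∈ sky P)
    (h : p 0 ≤ q 0) : q 1 ≤ p 1 := by
  classical
  rcases eq_or_ne q p with rfl | hne
  · exact le_refl _
  · have hqP : q ∈ P := (Finset.mem_filter.mp hq).1
    have := (Finset.mem_filter.mp hp).2 q hqP hne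
    rcases this with h1 | h1
    · linarith
    · linarith

lemma dist_le_comp {a b c : Pt} (h0 : |a 0 - b 0| ≤ |c 0 - b 0|)
    (h1 : |a 1 - b 1| ≤ |c 1 - b 1|) : dist a b ≤ dist c b := by
  rw [EuclideanSpace.dist_eq, EuclideanSpace.dist_eq]
  apply Real.sqrt_le_sqrt
  apply Finset.sum_le_sum
  intro i _
  fin_cases i
  · simpa [Real.dist_eq] using pow_le_pow_left₀ (abs_nonneg _) h0 2
  · simpa [Real.dist_eq] using pow_le_pow_left₀ (abs_nonneg _) h1 2

lemma sup_dist {P : Finset Pt}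
    {p₀ : Pt} (hp₀ : p₀ ∈ sky P) (hp₀min : ∀ q ∈ sky P, p₀ 0 ≤ q 0)
    {q₀ : Pt} (hq₀ : q₀ ∈ sky P) (hq₀max : ∀ q ∈ sky P, q 0 ≤ q₀ 0)
    {q : Pt} (hq : q ∈ sky P) :
    sSup {r : ℝ | ∃ x ∈ sky P, r = dist x q} = max (dist q p₀) (dist q q₀) := by
  have hbound : ∀ x ∈ sky P, dist x q ≤ max (dist q p₀) (dist q q₀) := by
    intro x hx
    rcases le_total (q 0) (x 0) with h | h
    · -- x is to the right of q: compare with q₀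
      have hx1 : x 1 ≤ q 1 := sky_anti_s13 hq hx h
      have hxq₀ : x 0 ≤ q₀ 0 := hq₀max x hx
      have hq₀x : q₀ 1 ≤ x 1 := sky_anti_s13 hx hq₀ hxq₀
      have hqq₀ : q 0 ≤ q₀ 0 := hq₀max q hq
      have : dist x q ≤ dist q₀ q := by
        apply dist_le_comp
        · rw [abs_of_nonneg (by linarith), abs_of_nonneg (by linarith)]; linarith
        · rw [abs_of_nonpos (by linarith), abs_of_nonpos (by linarith)]; linarith
      calc dist x q ≤ dist q₀ q := this
        _ = dist q q₀ := dist_comm _ _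
        _ ≤ _ := le_max_right _ _
    · -- x is to the left of q: compare with p₀
      have hx1 : q 1 ≤ x 1 := sky_anti_s13 hx hq h
      have hp₀x : p₀ 0 ≤ x 0 := hp₀min x hx
      have hxp₀ : x 1 ≤ p₀ 1 := sky_anti_s13 hp₀ hx hp₀x
      have hp₀q : p₀ 0 ≤ q 0 := hp₀min q hq
      have : dist x q ≤ dist p₀ q := by
        apply dist_le_comp
        · rw [abs_of_nonpos (by linarith), abs_of_nonpos (by linarith)]; linarith
        · rw [abs_of_nonneg (by linarith), abs_of_nonneg (by linarith)]; linarith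
      calc dist x q ≤ dist p₀ q := this
        _ = dist q p₀ := dist_comm _ _
        _ ≤ _ := le_max_left _ _
  have hset : {r : ℝ | ∃ x ∈ sky P, r = dist x q} = (fun x => dist x q) '' ↑(sky P) := by
    ext r; simp [eq_comm]
  have hbdd : BddAbove {r : ℝ | ∃ x ∈ sky P, r = dist x q} := by
    rw [hset]
    exact ((sky P).finite_toSet.image _).bddAbove
  apply le_antisymm
  · apply Real.sSup_le
    · rintro r ⟨x, hx, rfl⟩
      exact hbound x hx
    · exact le_trans dist_nonneg (le_max_left _ _)
  · apply max_le
    · rw [dist_comm]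
      exact le_csSup hbdd ⟨p₀, hp₀, rfl⟩
    · rw [dist_comm]
      exact le_csSup hbdd ⟨q₀, hq₀, rfl⟩

lemma psi_singleton (P : Finset Pt) (q : Pt) :
    psi {q} P = sSup {r : ℝ | ∃ x ∈ sky P, r = dist x q} := by
  unfold psi
  congr 1
  ext r
  constructor
  · rintro ⟨p, hp, rfl⟩
    refine ⟨p, hp, ?_⟩
    have : {s : ℝ | ∃ q' ∈ ({q} : Finset Pt), s = dist p q'} = {dist p q} := by
      ext s; simp
    rw [this, csInf_singleton]
  · rintro ⟨p, hp, rfl⟩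
    refine ⟨p, hp, ?_⟩
    have : {s : ℝ | ∃ q' ∈ ({q} : Finset Pt), s = dist p q'} = {dist p q} := by
      ext s; simp
    rw [this, csInf_singleton]

theorem stmt13 (P : Finset Pt) (hP : P.Nonempty)
    (p₀ : Pt) (hp₀ : p₀ ∈ sky P) (hp₀min : ∀ q ∈ sky P, p₀ 0 ≤ q 0)
    (q₀ : Pt) (hq₀ : q₀ ∈ sky P) (hq₀max : ∀ q ∈ sky P, q 0 ≤ q₀ 0) :
    optk P 1 = sInf {r : ℝ | ∃ p ∈ sky P, r = max (dist p p₀) (dist p q₀)} := by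
  unfold optk
  congr 1
  ext r
  constructor
  · rintro ⟨Q, hQsub, hQne, hQcard, rfl⟩
    obtain ⟨q, rfl⟩ : ∃ q, Q = {q} :=
      Finset.card_eq_one.mp (le_antisymm hQcard hQne.card_pos)
    have hq : q ∈ sky P := hQsub (Finset.mem_singleton_self q)
    exact ⟨q, hq, by rw [psi_singleton, sup_dist hp₀ hp₀min hq₀ hq₀max hq]⟩
  · rintro ⟨p, hp, rfl⟩
    refine ⟨{p}, ?_, ⟨p, Finset.mem_singleton_self p⟩, by simp, ?_⟩
    · simpa using hp
    · rw [psi_singleton, sup_dist hp₀ hp₀min hq₀ hq₀max hp]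
end

section
/- Let P be a finite set of points in the Euclidean plane and let p₀, q₀ ∈ sky(P) with x(p₀) < x(q₀). Let S' = { p ∈ sky(P) : x(p₀) ≤ x(p) ≤ x(q₀) }. Let p' be the point of S' with largest x-coordinate among those with d(·,p₀) ≤ d(·,q₀) (it exists since p₀ qualifies), and let q' be the point of S' with smallest x-coordinate among those with d(·,q₀) < d(·,p₀) (it exists since q₀ qualifies). Then every point r* ∈ S' minimizing max{ d(r,p₀), d(r,q₀) } over r ∈ S' satisfies r* ∈ {p', q'}, and every point r'* ∈ S' maximizing min{ d(r,p₀), d(r,q₀) } over r ∈ S' satisfies r'* ∈ {p', q'}. -/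
lemma sky_spec {P : Finset Pt} {p : Pt} (hp : p ∈ sky P) :
    p ∈ P ∧ ∀ q ∈ P, q ≠ p → q 0 < p 0 ∨ q 1 < p 1 := by
  classical
  simpa [sky] using (Finset.mem_filter.mp hp)

lemma sky_y_s15 {P : Finset Pt} {r s : Pt} (hr : r ∈ sky P) (hs : s ∈ sky P)
    (h : r 0 < s 0) : s 1 < r 1 := by
  have hrs : s ≠ r := by
    intro he; rw [he] at h; exact lt_irrefl _ h
  rcases (sky_spec hr).2 s (sky_spec hs).1 hrs with h1 | h1
  · linarith
  · exact h1

lemma sky_eq {P : Finset Pt} {r s : Pt} (hr : r ∈ sky P) (hs : s ∈ sky P)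
    (h : r 0 = s 0) : r = s := by
  by_contra hne
  rcases (sky_spec hr).2 s (sky_spec hs).1 (Ne.symm hne) with h1 | h1
  · linarith
  · rcases (sky_spec hs).2 r (sky_spec hr).1 hne with h2 | h2
    · linarith
    · linarith

lemma sky_y_le {P : Finset Pt} {r s : Pt} (hr : r ∈ sky P) (hs : s ∈ sky P)
    (h : r 0 ≤ s 0) : s 1 ≤ r 1 := by
  rcases lt_or_eq_of_le h with h' | h'
  · exact le_of_lt (sky_y_s15 hr hs h')
  · rw [sky_eq hr hs h']

lemma dist_formula (a c : Pt) : dist a c = Real.sqrt ((a 0 - c 0)^2 + (a 1 - c 1)^2) := by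
  rw [EuclideanSpace.dist_eq, Fin.sum_univ_two, Real.dist_eq, Real.dist_eq, sq_abs, sq_abs]

lemma dist_lt_of_sq (a b c : Pt) (h1 : (a 0 - c 0)^2 ≤ (b 0 - c 0)^2)
    (h2 : (a 1 - c 1)^2 ≤ (b 1 - c 1)^2)
    (h3 : (a 0 - c 0)^2 + (a 1 - c 1)^2 < (b 0 - c 0)^2 + (b 1 - c 1)^2) :
    dist a c < dist b c := by
  rw [dist_formula, dist_formula]
  apply Real.sqrt_lt_sqrt (by positivity) h3

-- distance to p₀ strictly increasing in x
lemma dist_incr (a b c : Pt) (h1 : c 0 ≤ a 0) (h2 : a 0 < b 0)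
    (h3 : b 1 ≤ a 1) (h4 : a 1 ≤ c 1) : dist a c < dist b c := by
  apply dist_lt_of_sq <;> nlinarith

-- distance to q₀ strictly decreasing in x
lemma dist_decr (a b c : Pt) (h1 : a 0 < b 0) (h2 : b 0 ≤ c 0)
    (h3 : c 1 ≤ b 1) (h4 : b 1 ≤ a 1) : dist b c < dist a c := by
  apply dist_lt_of_sq <;> nlinarith

theorem stmt15 (P : Finset Pt) (p₀ q₀ : Pt)
    (hp₀ : p₀ ∈ sky P) (hq₀ : q₀ ∈ sky P) (hx : p₀ 0 < q₀ 0)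
    (p' : Pt)
    (hp' : p' ∈ sky P ∧ p₀ 0 ≤ p' 0 ∧ p' 0 ≤ q₀ 0 ∧ dist p' p₀ ≤ dist p' q₀)
    (hp'max : ∀ r ∈ sky P, p₀ 0 ≤ r 0 → r 0 ≤ q₀ 0 → dist r p₀ ≤ dist r q₀ →
      r 0 ≤ p' 0)
    (q' : Pt)
    (hq' : q' ∈ sky P ∧ p₀ 0 ≤ q' 0 ∧ q' 0 ≤ q₀ 0 ∧ dist q' q₀ < dist q' p₀)
    (hq'min : ∀ r ∈ sky P, p₀ 0 ≤ r 0 → r 0 ≤ q₀ 0 → dist r q₀ < dist r p₀ →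
      q' 0 ≤ r 0) :
    (∀ rstar ∈ sky P, p₀ 0 ≤ rstar 0 → rstar 0 ≤ q₀ 0 →
      (∀ r ∈ sky P, p₀ 0 ≤ r 0 → r 0 ≤ q₀ 0 →
        max (dist rstar p₀) (dist rstar q₀) ≤ max (dist r p₀) (dist r q₀)) →
      rstar = p' ∨ rstar = q') ∧
    (∀ rstar' ∈ sky P, p₀ 0 ≤ rstar' 0 → rstar' 0 ≤ q₀ 0 →
      (∀ r ∈ sky P, p₀ 0 ≤ r 0 → r 0 ≤ q₀ 0 →
        min (dist r p₀) (dist r q₀) ≤ min (dist rstar' p₀) (dist rstar' q₀)) →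
      rstar' = p' ∨ rstar' = q') := by
  obtain ⟨hp'S, hp'x1, hp'x2, hp'd⟩ := hp'
  obtain ⟨hq'S, hq'x1, hq'x2, hq'd⟩ := hq'
  -- dichotomy: every r in S' has r 0 ≤ p' 0 or q' 0 ≤ r 0
  have dich : ∀ r ∈ sky P, p₀ 0 ≤ r 0 → r 0 ≤ q₀ 0 → r 0 ≤ p' 0 ∨ q' 0 ≤ r 0 := by
    intro r hr h1 h2
    rcases le_or_gt (dist r p₀) (dist r q₀) with h | h
    · exact Or.inl (hp'max r hr h1 h2 h)
    · exact Or.inr (hq'min r hr h1 h2 h)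
  constructor
  · intro rstar hrS hr1 hr2 hmin
    rcases dich rstar hrS hr1 hr2 with h | h
    · rcases lt_or_eq_of_le h with h' | h'
      · -- rstar 0 < p' 0 : dist p' q₀ < dist rstar q₀, contradiction
        exfalso
        have hd : dist p' q₀ < dist rstar q₀ :=
          dist_decr rstar p' q₀ h' hp'x2 (sky_y_le hp'S hq₀ hp'x2) (sky_y_le hrS hp'S h)
        have hm := hmin p' hp'S hp'x1 hp'x2
        have := le_max_right (dist rstar p₀) (dist rstar q₀)
        rw [max_eq_right hp'd] at hm
        linarith
      · exact Or.inl (sky_eq hrS hp'S h')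
    · rcases lt_or_eq_of_le h with h' | h'
      · exfalso
        have hd : dist q' p₀ < dist rstar p₀ :=
          dist_incr q' rstar p₀ hq'x1 h' (sky_y_le hq'S hrS h) (sky_y_le hp₀ hq'S hq'x1)
        have hm := hmin q' hq'S hq'x1 hq'x2
        have := le_max_left (dist rstar p₀) (dist rstar q₀)
        rw [max_eq_left (le_of_lt hq'd)] at hm
        linarith
      · exact Or.inr (sky_eq hrS hq'S h'.symm)
  · intro rstar hrS hr1 hr2 hmax
    rcases dich rstar hrS hr1 hr2 with h | h
    · rcases lt_or_eq_of_le h with h' | h'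
      · exfalso
        have hd : dist rstar p₀ < dist p' p₀ :=
          dist_incr rstar p' p₀ hr1 h' (sky_y_le hrS hp'S h) (sky_y_le hp₀ hrS hr1)
        have hm := hmax p' hp'S hp'x1 hp'x2
        have := min_le_left (dist rstar p₀) (dist rstar q₀)
        rw [min_eq_left hp'd] at hm
        linarith
      · exact Or.inl (sky_eq hrS hp'S h')
    · rcases lt_or_eq_of_le h with h' | h'
      · exfalso
        have hd : dist rstar q₀ < dist q' q₀ :=
          dist_decr q' rstar q₀ h' hr2 (sky_y_le hrS hq₀ hr2) (sky_y_le hq'S hrS h)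
        have hm := hmax q' hq'S hq'x1 hq'x2
        have := min_le_right (dist rstar p₀) (dist rstar q₀)
        rw [min_eq_right (le_of_lt hq'd)] at hm
        linarith
      · exact Or.inr (sky_eq hrS hq'S h'.symm)
end

section
/- Let P be a nonempty finite set of points in the Euclidean plane, let p₀ be the point of sky(P) with smallest x-coordinate and q₀ the point of sky(P) with largest x-coordinate. Then for all p, q ∈ sky(P), d(p,q) ≤ d(p₀,q₀); that is, the diameter of sky(P) is realized by its two extreme points. -/
theorem stmt17 (P : Finset Pt) (hP : P.Nonempty)
    (p₀ : Pt) (hp₀ : p₀ ∈ sky P) (hp₀min : ∀ q ∈ sky P, p₀ 0 ≤ q 0)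
    (q₀ : Pt) (hq₀ : q₀ ∈ sky P) (hq₀max : ∀ q ∈ sky P, q 0 ≤ q₀ 0) :
    ∀ p ∈ sky P, ∀ q ∈ sky P, dist p q ≤ dist p₀ q₀ := by
  classical
  have hymax : ∀ p ∈ sky P, p 1 ≤ p₀ 1 := by
    intro p hp
    rcases eq_or_ne p p₀ with rfl | hne
    · exact le_refl _
    · have hpP : p ∈ P := (Finset.mem_filter.mp hp).1
      have := (Finset.mem_filter.mp hp₀).2 p hpP hne
      rcases this with h | h
      · exact absurd h (not_lt.mpr (hp₀min p hp))
      · exact le_of_lt h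
  have hymin : ∀ p ∈ sky P, q₀ 1 ≤ p 1 := by
    intro p hp
    rcases eq_or_ne q₀ p with rfl | hne
    · exact le_refl _
    · have hq₀P : q₀ ∈ P := (Finset.mem_filter.mp hq₀).1
      have := (Finset.mem_filter.mp hp).2 q₀ hq₀P hne
      rcases this with h | h
      · exact absurd h (not_lt.mpr (hq₀max p hp))
      · exact le_of_lt h
  intro p hp q hq
  have hx : |p 0 - q 0| ≤ q₀ 0 - p₀ 0 := by
    rw [abs_sub_le_iff]
    constructor
    · linarith [hq₀max p hp, hp₀min q hq]
    · linarith [hq₀max q hq, hp₀min p hp]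
  have hy : |p 1 - q 1| ≤ p₀ 1 - q₀ 1 := by
    rw [abs_sub_le_iff]
    constructor
    · linarith [hymax p hp, hymin q hq]
    · linarith [hymax q hq, hymin p hp]
  rw [EuclideanSpace.dist_eq, EuclideanSpace.dist_eq]
  apply Real.sqrt_le_sqrt
  rw [Fin.sum_univ_two, Fin.sum_univ_two]
  have h1 : (p 0 - q 0) ^ 2 ≤ (p₀ 0 - q₀ 0) ^ 2 := by
    calc (p 0 - q 0) ^ 2 = |p 0 - q 0| ^ 2 := (sq_abs _).symm
      _ ≤ (q₀ 0 - p₀ 0) ^ 2 := by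
          apply pow_le_pow_left₀ (abs_nonneg _) hx
      _ = (p₀ 0 - q₀ 0) ^ 2 := by ring
  have h2 : (p 1 - q 1) ^ 2 ≤ (p₀ 1 - q₀ 1) ^ 2 := by
    calc (p 1 - q 1) ^ 2 = |p 1 - q 1| ^ 2 := (sq_abs _).symm
      _ ≤ (p₀ 1 - q₀ 1) ^ 2 := by
          apply pow_le_pow_left₀ (abs_nonneg _) hy
  simp only [Real.dist_eq]
  calc |p 0 - q 0| ^ 2 + |p 1 - q 1| ^ 2
      = (p 0 - q 0) ^ 2 + (p 1 - q 1) ^ 2 := by rw [sq_abs, sq_abs]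
    _ ≤ (p₀ 0 - q₀ 0) ^ 2 + (p₀ 1 - q₀ 1) ^ 2 := by linarith
    _ = |p₀ 0 - q₀ 0| ^ 2 + |p₀ 1 - q₀ 1| ^ 2 := by rw [sq_abs, sq_abs]
end

section
/- Let S be a finite set of points in a metric space, let λ ≥ 0, let k ≥ 1 be an integer, and suppose c₁, …, c_{k+1} are k+1 pairwise distinct points of S with d(cᵢ, cⱼ) ≥ λ for all i ≠ j. Then for every nonempty subset Q ⊆ S with |Q| ≤ k, there exists a point p ∈ S with min_{q ∈ Q} d(p,q) ≥ λ/2; that is, max_{p ∈ S} min_{q ∈ Q} d(p,q) ≥ λ/2. -/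
theorem stmt18 {X : Type*} [MetricSpace X] (S : Finset X)
    (lam : ℝ) (hlam : 0 ≤ lam) (k : ℕ) (hk : 1 ≤ k)
    (c : Fin (k + 1) → X) (hcS : ∀ i, c i ∈ S)
    (hinj : Function.Injective c)
    (hfar : ∀ i j, i ≠ j → lam ≤ dist (c i) (c j)) :
    ∀ Q : Finset X, Q ⊆ S → Q.Nonempty → Q.card ≤ k →
      ∃ p ∈ S, ∀ q ∈ Q, lam / 2 ≤ dist p q := by
  intro Q hQS hQne hQcard
  by_contra h
  push_neg at h
  -- for each i, choose q i ∈ Q with dist (c i) (q i) < lam/2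
  have hchoice : ∀ i : Fin (k + 1), ∃ q ∈ Q, dist (c i) q < lam / 2 := fun i =>
    h (c i) (hcS i)
  choose f hfQ hfd using hchoice
  -- f : Fin (k+1) → X lands in Q, card Q ≤ k < k+1, so not injective
  have : ¬ Function.Injective f := by
    intro hf
    have := Finset.card_le_card_of_injOn (s := Finset.univ) (t := Q) f
      (fun i _ => hfQ i) (fun a _ b _ hab => hf hab)
    simp [Finset.card_fin] at this
    omega
  rw [Function.not_injective_iff] at this
  obtain ⟨i, j, hij, hne⟩ := this
  have hlt : dist (c i) (c j) < lam := by
    calc dist (c i) (c j) ≤ dist (c i) (f i) + dist (f i) (c j) := dist_triangle _ _ _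
      _ = dist (c i) (f i) + dist (c j) (f j) := by rw [hij, dist_comm (f j) (c j)]
      _ < lam / 2 + lam / 2 := add_lt_add (hfd i) (hfd j)
      _ = lam := by ring
  exact absurd (hfar i j hne) (not_le.mpr hlt)
end
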